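/- The odd *-Fibonacci polynomials satisfy, for n ≥ 0: F_{4n+3} = s₁·Σ_{i=0}^{n} C(2n+1-i, i)·(-s₃)^i·s₁^{n+1-i}·s₂^{n-i} - s₂·Σ_{i=0}^{n} C(2n-i, i)·(-s₃)^i·(s₁s₂)^{n-i}. -/
import Mathlib


open MvPolynomial

noncomputable section

/-- The polynomial ring `ℤ[s₁,s₂,s₃]`. -/
abbrev A3 := MvPolynomial (Fin 3) ℤ

def S1 : A3 := X 0
def S2 : A3 := X 1
def S3 : A3 := X 2

/-- `g n = s₂` if `n` is odd, `s₁` if `n` is even. -/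
def g (n : ℕ) : A3 := if n % 2 = 1 then S2 else S1

/-- The odd `*`-Fibonacci polynomials: `starFib n = F_{2n+1}`, with `F₁ = s₁`,
`F₃ = s₁² - s₂`, `F_{4n+3} = s₁ F_{4n+1} - s₃ F_{4n-1}`,
`F_{4n+5} = s₂ F_{4n+3} - s₃ F_{4n+1}` (i.e. `F_{2n+3} = g_n F_{2n+1} - s₃ F_{2n-1}`). -/
def starFib : ℕ → A3
  | 0 => S1
  | 1 => S1 ^ 2 - S2
  | (n + 2) => g (n + 1) * starFib (n + 1) - S3 * starFib n

def bseq (n : ℕ) : A3 :=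
  ∑ i ∈ Finset.range (n + 1),
    (Nat.choose (2 * n - i) i : A3) * (-S3) ^ i * (S1 * S2) ^ (n - i)

def cseq (n : ℕ) : A3 :=
  ∑ i ∈ Finset.range (n + 1),
    (Nat.choose (2 * n + 1 - i) i : A3) * (-S3) ^ i * (S1 * S2) ^ (n - i)

lemma keyL (m n : ℕ) (h : n ≤ m) :
    ∑ i ∈ Finset.range (n + 2),
        (Nat.choose (m + 2 - i) i : A3) * (-S3) ^ i * (S1 * S2) ^ (n + 1 - i)
      = (∑ i ∈ Finset.range (n + 2),
          (Nat.choose (m + 1 - i) i : A3) * (-S3) ^ i * (S1 * S2) ^ (n + 1 - i))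
        + (-S3) * ∑ i ∈ Finset.range (n + 1),
            (Nat.choose (m - i) i : A3) * (-S3) ^ i * (S1 * S2) ^ (n - i) := by
  rw [Finset.sum_range_succ' _ (n + 1), Finset.sum_range_succ' (fun i =>
    (Nat.choose (m + 1 - i) i : A3) * (-S3) ^ i * (S1 * S2) ^ (n + 1 - i)) (n + 1),
    Finset.mul_sum]
  have e1 : ∀ i ∈ Finset.range (n + 1),
      (Nat.choose (m + 2 - (i + 1)) (i + 1) : A3) * (-S3) ^ (i + 1) * (S1 * S2) ^ (n + 1 - (i + 1))
      = (Nat.choose (m + 1 - (i + 1)) (i + 1) : A3) * (-S3) ^ (i + 1) * (S1 * S2) ^ (n + 1 - (i + 1))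
        + (-S3) * ((Nat.choose (m - i) i : A3) * (-S3) ^ i * (S1 * S2) ^ (n - i)) := by
    intro i hi
    have hin : i ≤ n := Nat.lt_succ_iff.mp (Finset.mem_range.mp hi)
    have him : i ≤ m := hin.trans h
    have h1 : m + 2 - (i + 1) = (m - i) + 1 := by omega
    have h2 : m + 1 - (i + 1) = m - i := by omega
    have h3 : n + 1 - (i + 1) = n - i := by omega
    rw [h1, h2, h3, Nat.choose_succ_succ]
    push_cast
    ring
  rw [Finset.sum_congr rfl e1, Finset.sum_add_distrib]
  simp
  try ring

lemma brec (n : ℕ) : bseq (n + 1) = (S1 * S2) * cseq n - S3 * bseq n := by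
  have hb1 : bseq (n + 1) = ∑ i ∈ Finset.range (n + 2),
      (Nat.choose (2 * n + 2 - i) i : A3) * (-S3) ^ i * (S1 * S2) ^ (n + 1 - i) := by
    unfold bseq
    apply Finset.sum_congr rfl
    intro i _
    congr 2
    try omega
  rw [hb1, keyL (2 * n) n (by omega)]
  have h2 : ∑ i ∈ Finset.range (n + 2),
      (Nat.choose (2 * n + 1 - i) i : A3) * (-S3) ^ i * (S1 * S2) ^ (n + 1 - i)
      = (S1 * S2) * cseq n := by
    rw [Finset.sum_range_succ]
    have hz : (Nat.choose (2 * n + 1 - (n + 1)) (n + 1) : A3) = 0 := by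
      have : 2 * n + 1 - (n + 1) = n := by omega
      rw [this, Nat.choose_eq_zero_of_lt (by omega)]
      simp
    rw [hz]
    unfold cseq
    rw [Finset.mul_sum]
    simp only [zero_mul, mul_zero, add_zero]
    apply Finset.sum_congr rfl
    intro i hi
    have hin : i ≤ n := Nat.lt_succ_iff.mp (Finset.mem_range.mp hi)
    have : n + 1 - i = (n - i) + 1 := by omega
    rw [this, pow_succ]
    ring
  rw [h2]
  unfold bseq
  ring

lemma crec (n : ℕ) : cseq (n + 1) = bseq (n + 1) - S3 * cseq n := by
  have hc1 : cseq (n + 1) = ∑ i ∈ Finset.range (n + 2),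
      (Nat.choose (2 * n + 1 + 2 - i) i : A3) * (-S3) ^ i * (S1 * S2) ^ (n + 1 - i) := by
    unfold cseq
    apply Finset.sum_congr rfl
    intro i _
    congr 3
    try omega
  have hb1 : bseq (n + 1) = ∑ i ∈ Finset.range (n + 2),
      (Nat.choose (2 * n + 1 + 1 - i) i : A3) * (-S3) ^ i * (S1 * S2) ^ (n + 1 - i) := by
    unfold bseq
    apply Finset.sum_congr rfl
    intro i _
    congr 3
    try omega
  rw [hc1, hb1, keyL (2 * n + 1) n (by omega)]
  unfold cseq
  ring

lemma g_even (n : ℕ) : g (2 * n) = S1 := by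
  unfold g
  have : 2 * n % 2 = 0 := by omega
  simp [this]

lemma g_odd (n : ℕ) : g (2 * n + 1) = S2 := by
  unfold g
  have : (2 * n + 1) % 2 = 1 := by omega
  simp [this]

lemma mainAux (n : ℕ) :
    starFib (2 * n + 1) = S1 ^ 2 * cseq n - S2 * bseq n ∧
    starFib (2 * n + 2) = S1 * bseq (n + 1) - S2 ^ 2 * cseq n := by
  induction n with
  | zero =>
    constructor
    · show starFib 1 = _
      simp [starFib, bseq, cseq]
      try ring
    · show starFib 2 = _
      rw [show (2:ℕ) = 0 + 2 by rfl]
      rw [starFib]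
      show g 1 * starFib 1 - S3 * starFib 0 = _
      rw [show (1:ℕ) = 2*0+1 by rfl, g_odd, brec 0]
      simp [starFib, bseq, cseq]
      try ring
  | succ n ih =>
    obtain ⟨h1, h2⟩ := ih
    have hq : starFib (2 * (n + 1) + 1) = g (2 * n + 2) * starFib (2 * n + 2) - S3 * starFib (2 * n + 1) := by
      show starFib (2 * n + 1 + 2) = _
      rw [starFib]
    have hp : starFib (2 * (n + 1) + 2) = g (2 * n + 3) * starFib (2 * (n + 1) + 1) - S3 * starFib (2 * n + 2) := by
      show starFib (2 * n + 2 + 2) = _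
      rw [starFib, show 2 * n + 2 + 1 = 2 * (n + 1) + 1 by ring]
    have hg1 : g (2 * n + 2) = S1 := by rw [show 2*n+2 = 2*(n+1) by ring, g_even]
    have hg2 : g (2 * n + 3) = S2 := by rw [show 2*n+3 = 2*(n+1)+1 by ring, g_odd]
    have hQ : starFib (2 * (n + 1) + 1) = S1 ^ 2 * cseq (n + 1) - S2 * bseq (n + 1) := by
      rw [hq, hg1, h1, h2, crec n, brec n]
      ring
    refine ⟨hQ, ?_⟩
    rw [hp, hg2, hQ, h2, crec n, brec (n + 1), crec n, brec n]
    ring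

/-- Explicit formula for `F_{4n+3}`. -/
theorem starFib_formula_4n3 (n : ℕ) :
    starFib (2 * n + 1) =
      S1 * ∑ i ∈ Finset.range (n + 1),
          (Nat.choose (2 * n + 1 - i) i : A3) * (-S3) ^ i * S1 ^ (n + 1 - i) * S2 ^ (n - i)
      - S2 * ∑ i ∈ Finset.range (n + 1),
          (Nat.choose (2 * n - i) i : A3) * (-S3) ^ i * (S1 * S2) ^ (n - i) := by
  rw [(mainAux n).1]
  have : ∑ i ∈ Finset.range (n + 1),
      (Nat.choose (2 * n + 1 - i) i : A3) * (-S3) ^ i * S1 ^ (n + 1 - i) * S2 ^ (n - i)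
      = S1 * cseq n := by
    unfold cseq
    rw [Finset.mul_sum]
    apply Finset.sum_congr rfl
    intro i hi
    have hin : i ≤ n := Nat.lt_succ_iff.mp (Finset.mem_range.mp hi)
    have : n + 1 - i = (n - i) + 1 := by omega
    rw [this, pow_succ, mul_pow]
    ring
  rw [this]
  unfold bseq
  ring
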